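/- arXiv:1903.09031 — 2 statements merged into one kernel-verified Lean document; each statement's English description precedes it below -/
import Mathlib

section
/- For every complex z with Re z > 0, |δ(e^{−z})| ≤ 2·coth((Re z)/2), where δ(ζ) = 2(1−ζ)/(1+ζ). -/
/-- The characteristic (transfer) function of the trapezoidal rule. -/
noncomputable def trDelta (ζ : ℂ) : ℂ := 2 * (1 - ζ) / (1 + ζ)

/-- The real hyperbolic cotangent. -/
noncomputable def Real.coth (x : ℝ) : ℝ := Real.cosh x / Real.sinh x

/- On the unit disc, `|1 - ζ| ≤ 1 + |ζ|` and `|1 + ζ| ≥ 1 - |ζ|`; for `ζ = e^{-z}` the resulting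
bound `2 (1 + e^{-x}) / (1 - e^{-x})` with `x = Re z` is exactly `2 coth (x / 2)`. -/

theorem Real.coth_half_eq (x : ℝ) :
    Real.coth (x / 2) = (1 + Real.exp (-x)) / (1 - Real.exp (-x)) := by
  have hx : Real.exp (-x) = Real.exp (-(x / 2)) * Real.exp (-(x / 2)) := by
    rw [← Real.exp_add]; ring_nf
  have hone : Real.exp (x / 2) * Real.exp (-(x / 2)) = 1 := by
    rw [← Real.exp_add, add_neg_cancel, Real.exp_zero]
  have hpos : 0 < Real.exp (-(x / 2)) := Real.exp_pos _
  rw [Real.coth, Real.cosh_eq, Real.sinh_eq, div_div_div_cancel_right₀ two_ne_zero, hx,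
    ← mul_div_mul_right _ _ hpos.ne']
  congr 1 <;> linear_combination hone

theorem norm_trDelta_le {ζ : ℂ} (hζ : ‖ζ‖ < 1) :
    ‖trDelta ζ‖ ≤ 2 * ((1 + ‖ζ‖) / (1 - ‖ζ‖)) := by
  have hnum : ‖1 - ζ‖ ≤ 1 + ‖ζ‖ := by simpa using norm_sub_le (1 : ℂ) ζ
  have hden : 1 - ‖ζ‖ ≤ ‖1 + ζ‖ := by
    simpa using norm_sub_norm_le (1 : ℂ) (-ζ)
  rw [trDelta, norm_div, norm_mul, Complex.norm_two, mul_div_assoc]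
  gcongr

theorem abs_delta_exp_neg_le_coth (z : ℂ) (hz : 0 < z.re) :
    ‖trDelta (Complex.exp (-z))‖ ≤ 2 * Real.coth (z.re / 2) := by
  have hnorm : ‖Complex.exp (-z)‖ = Real.exp (-z.re) := by
    rw [Complex.norm_exp, Complex.neg_re]
  have hlt : ‖Complex.exp (-z)‖ < 1 := by
    rw [hnorm, Real.exp_lt_one_iff]; linarith
  simpa only [Real.coth_half_eq, hnorm] using norm_trDelta_le hlt
end

section
/- With D as above, for every complex z with Re z > 0 and 0 < |z| < π, Re(δ(e^{−z})/z) ≥ 1 − |z|²·D(|z|). -/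
open Complex

lemma cosh_ne_zero_of_re_ne_zero {w : ℂ} (hw : w.re ≠ 0) : cosh w ≠ 0 := by
  intro h
  have hexp : exp (w + w) = -1 := by
    rw [exp_add]
    have hinv : exp w * exp (-w) = 1 := by rw [← exp_add, add_neg_cancel, exp_zero]
    rw [cosh, div_eq_zero_iff] at h
    linear_combination exp w * h.resolve_right two_ne_zero - hinv
  have := congrArg norm hexp
  rw [norm_exp, norm_neg, norm_one, Real.exp_eq_one_iff, add_re] at this
  exact hw (by linarith)

lemma trDelta_exp_neg_two_mul {w : ℂ} (hw : cosh w ≠ 0) :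
    trDelta (exp (-(2 * w))) = 2 * tanh w := by
  have hinv : exp w * exp (-w) = 1 := by rw [← exp_add, add_neg_cancel, exp_zero]
  have hsq : exp (-(2 * w)) = exp (-w) * exp (-w) := by rw [← exp_add]; ring_nf
  rw [tanh_eq_sinh_div_cosh, trDelta, hsq, sinh, cosh]
  rw [cosh] at hw
  generalize exp w = u, exp (-w) = v at *
  have hsum : u + v ≠ 0 := by simpa using hw
  have hden : 1 + v ^ 2 ≠ 0 := by
    rw [← hinv, sq, ← add_mul]
    exact mul_ne_zero hsum (by rintro rfl; simp at hinv)
  field_simp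
  linear_combination (-2 * v) * hinv

lemma trDelta_exp_neg_div_eq {z : ℂ} (hz : z ≠ 0) (hcosh : cosh (z / 2) ≠ 0) :
    trDelta (exp (-z)) / z = 1 + (z / 2) ^ 2 * ((tanh (z / 2) - z / 2) / (z / 2) ^ 3) := by
  rw [← mul_div_cancel₀ z two_ne_zero, trDelta_exp_neg_two_mul hcosh]
  field_simp
  ring

lemma one_sub_norm_le_re_one_add (u : ℂ) : 1 - ‖u‖ ≤ (1 + u).re := by
  have := neg_abs_le u.re
  have := abs_re_le_norm u
  simp only [add_re, one_re]; linarith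

lemma norm_tsum_mul_half_pow_le (a : ℕ → ℂ) (z : ℂ)
    (h : Summable fun ℓ : ℕ => ‖a ℓ‖ / 2 ^ (2 * ℓ + 2) * ‖z‖ ^ (2 * ℓ)) :
    ‖∑' ℓ : ℕ, a ℓ * (z / 2) ^ (2 * ℓ)‖ ≤ 4 * ∑' ℓ : ℕ, ‖a ℓ‖ / 2 ^ (2 * ℓ + 2) * ‖z‖ ^ (2 * ℓ) := by
  have hterm : (fun ℓ : ℕ => ‖a ℓ * (z / 2) ^ (2 * ℓ)‖)
      = fun ℓ : ℕ => 4 * (‖a ℓ‖ / 2 ^ (2 * ℓ + 2) * ‖z‖ ^ (2 * ℓ)) := by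
    ext ℓ
    rw [norm_mul, norm_pow, norm_div, RCLike.norm_ofNat, div_pow, pow_add]
    field_simp
    norm_num
  rw [← tsum_mul_left, ← hterm]
  exact norm_tsum_le_tsum_norm (hterm ▸ h.mul_left 4)

theorem re_delta_div_ge
    (a : ℕ → ℂ)
    (ha : ∀ ω : ℂ, ‖ω‖ < Real.pi / 2 → ω ≠ 0 →
      (Complex.tanh ω - ω) / ω ^ 3 = ∑' ℓ : ℕ, a ℓ * ω ^ (2 * ℓ))
    (hsum : ∀ σ : ℝ, 0 ≤ σ → σ < Real.pi →
      Summable fun ℓ : ℕ => ‖a ℓ‖ / 2 ^ (2 * ℓ + 2) * σ ^ (2 * ℓ))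
    (D : ℝ → ℝ)
    (hD : ∀ σ : ℝ, D σ = ∑' ℓ : ℕ, ‖a ℓ‖ / 2 ^ (2 * ℓ + 2) * σ ^ (2 * ℓ)) :
    ∀ z : ℂ, 0 < z.re → 0 < ‖z‖ → ‖z‖ < Real.pi →
      (trDelta (Complex.exp (-z)) / z).re
        ≥ 1 - ‖z‖ ^ 2 * D (‖z‖) := by
  intro z hre hz hlt
  have hz0 : z ≠ 0 := norm_pos_iff.mp hz
  have hcosh : cosh (z / 2) ≠ 0 := cosh_ne_zero_of_re_ne_zero (by rw [div_ofNat_re]; positivity)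
  have hnorm_half : ‖z / 2‖ = ‖z‖ / 2 := by rw [norm_div, RCLike.norm_ofNat]
  have hS : ‖(tanh (z / 2) - z / 2) / (z / 2) ^ 3‖ ≤ 4 * D ‖z‖ := by
    rw [ha _ (by linarith) (div_ne_zero hz0 two_ne_zero), hD]
    exact norm_tsum_mul_half_pow_le a z (hsum _ hz.le hlt)
  calc (trDelta (exp (-z)) / z).re
      = (1 + (z / 2) ^ 2 * ((tanh (z / 2) - z / 2) / (z / 2) ^ 3)).re := by
        rw [trDelta_exp_neg_div_eq hz0 hcosh]
    _ ≥ 1 - ‖(z / 2) ^ 2 * ((tanh (z / 2) - z / 2) / (z / 2) ^ 3)‖ :=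
        one_sub_norm_le_re_one_add _
    _ ≥ 1 - ‖z‖ ^ 2 * D ‖z‖ := by
        rw [norm_mul, norm_pow, hnorm_half]
        nlinarith [sq_nonneg ‖z‖]
end
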